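/- For any ε > 0 and any θ ∈ [-π/2, π/2], there exists θ* ∈ [-π/2, π/2] with 2^n tan(θ*/2) an integer for n = ⌈log₂(1/ε)⌉, such that 2|sin((θ - θ*)/2)| ≤ ε and (1 + tan²(θ*/2))/2 ≥ 1/2. -/

import Mathlib

open Real Set

/-!
Write `t = tan (θ / 2)`, so that `|t| ≤ 1` and `θ = 2 arctan t`. Rounding `t` to the nearest
multiple `z / N` of `1 / N`, with `N = 2 ^ n ≥ 1 / ε`, keeps `|z / N| ≤ 1`, so
`θ* = 2 arctan (z / N)` stays in `[-π/2, π/2]`. Since `|sin u| ≤ |u|` and `arctan` is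
`1`-Lipschitz, `2 |sin ((θ - θ*) / 2)| ≤ 2 |t - z / N| ≤ 1 / N ≤ ε`. When `ε ≥ 2` the exponent
`n` may be negative, but then `θ* = 0` already works.
-/

namespace Real

theorem lipschitzWith_arctan : LipschitzWith 1 arctan := by
  refine lipschitzWith_of_nnnorm_deriv_le differentiable_arctan fun x => ?_
  rw [deriv_arctan, ← NNReal.coe_le_coe, coe_nnnorm, norm_eq_abs, NNReal.coe_one,
    abs_of_pos (by positivity), div_le_one (by positivity)]
  nlinarith [sq_nonneg x]

theorem abs_arctan_sub_arctan_le (x y : ℝ) : |arctan x - arctan y| ≤ |x - y| := by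
  simpa [dist_eq] using lipschitzWith_arctan.dist_le_mul x y

theorem abs_le_one_iff_two_mul_arctan_mem_Icc {x : ℝ} :
    |x| ≤ 1 ↔ 2 * arctan x ∈ Icc (-(π / 2)) (π / 2) := by
  have h : 2 * arctan x ∈ Icc (-(π / 2)) (π / 2) ↔
      arctan (-1) ≤ arctan x ∧ arctan x ≤ arctan 1 := by
    rw [arctan_neg, arctan_one, mem_Icc]
    constructor <;> rintro ⟨h₁, h₂⟩ <;> constructor <;> linarith
  rw [h, arctan_le_arctan_iff, arctan_le_arctan_iff, abs_le]

theorem two_mul_arctan_tan_half {θ : ℝ} (hθ : θ ∈ Icc (-(π / 2)) (π / 2)) :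
    2 * arctan (tan (θ / 2)) = θ := by
  obtain ⟨h₁, h₂⟩ := hθ
  rw [arctan_tan (by linarith [pi_pos]) (by linarith [pi_pos])]
  ring

theorem le_zpow_ceil_logb {b x : ℝ} (hb : 1 < b) (hx : 0 < x) : x ≤ b ^ ⌈logb b x⌉ := by
  rw [← rpow_intCast, ← logb_le_iff_le_rpow hb hx]
  exact Int.le_ceil _

end Real

theorem exists_int_abs_div_le_one_and_abs_sub_div_le {N : ℕ} (hN : 0 < N) {x : ℝ}
    (hx : |x| ≤ 1) : ∃ z : ℤ, |(z : ℝ) / N| ≤ 1 ∧ |x - z / N| ≤ 1 / (2 * N) := by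
  have hN' : (0 : ℝ) < N := by exact_mod_cast hN
  set z := round (N * x)
  have hround : |N * x - z| ≤ 1 / 2 := abs_sub_round _
  have hscaled : |N * x| ≤ N := by
    rw [abs_mul, Nat.abs_cast]
    exact mul_le_of_le_one_right hN'.le hx
  -- `|z| ≤ N + 1/2` forces `|z| ≤ N` because both are integers.
  have hz : |z| ≤ (N : ℤ) := by
    have : ((|z| : ℤ) : ℝ) < (N : ℤ) + 1 := by
      push_cast
      linarith [abs_sub_abs_le_abs_sub (z : ℝ) (N * x), abs_sub_comm (N * x) (z : ℝ)]
    exact Int.lt_add_one_iff.mp (by exact_mod_cast this)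
  refine ⟨z, ?_, ?_⟩
  · rw [abs_div, Nat.abs_cast, div_le_one hN']
    exact_mod_cast hz
  · rw [show x - z / N = (N * x - z) / N by field_simp, abs_div, Nat.abs_cast,
      div_le_iff₀ hN']
    calc |N * x - z| ≤ 1 / 2 := hround
      _ = 1 / (2 * N) * N := by field_simp

theorem exists_tan_half_mul_eq_int_and_two_mul_abs_sin_half_sub_le {θ : ℝ}
    (hθ : θ ∈ Icc (-(π / 2)) (π / 2)) {N : ℕ} (hN : 0 < N) :
    ∃ θs ∈ Icc (-(π / 2)) (π / 2), (∃ z : ℤ, (N : ℝ) * tan (θs / 2) = z) ∧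
      2 * |sin ((θ - θs) / 2)| ≤ 1 / N := by
  set t := tan (θ / 2)
  have ht : |t| ≤ 1 := abs_le_one_iff_two_mul_arctan_mem_Icc.mpr <| by
    rwa [two_mul_arctan_tan_half hθ]
  have hθt : θ = 2 * arctan t := (two_mul_arctan_tan_half hθ).symm
  obtain ⟨z, hz, hclose⟩ := exists_int_abs_div_le_one_and_abs_sub_div_le hN ht
  set θs := 2 * arctan (z / N)
  have htan : tan (θs / 2) = z / N := by
    rw [mul_div_cancel_left₀ _ two_ne_zero, tan_arctan]
  refine ⟨θs, abs_le_one_iff_two_mul_arctan_mem_Icc.mp hz, ⟨z, ?_⟩, ?_⟩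
  · rw [htan]
    field_simp
  · calc 2 * |sin ((θ - θs) / 2)| ≤ 2 * |(θ - θs) / 2| :=
          mul_le_mul_of_nonneg_left abs_sin_le_abs two_pos.le
      _ = 2 * |arctan t - arctan (z / N)| := by
        rw [hθt]; congr 2; ring
      _ ≤ 2 * |t - z / N| := by linarith [abs_arctan_sub_arctan_le t (z / N)]
      _ ≤ 2 * (1 / (2 * N)) := by gcongr
      _ = 1 / N := by field_simp

theorem stmt_19 (ε θ : ℝ) (hε : 0 < ε)
    (hθ : θ ∈ Set.Icc (-(π / 2)) (π / 2)) :
    ∃ θs ∈ Set.Icc (-(π / 2)) (π / 2),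
      (∃ z : ℤ, (2 : ℝ) ^ (⌈Real.logb 2 (1 / ε)⌉) * Real.tan (θs / 2) = z) ∧
      2 * |Real.sin ((θ - θs) / 2)| ≤ ε ∧
      (1 + Real.tan (θs / 2) ^ 2) / 2 ≥ 1 / 2 := by
  have hsucc (θs : ℝ) : (1 + tan (θs / 2) ^ 2) / 2 ≥ 1 / 2 := by
    nlinarith [sq_nonneg (tan (θs / 2))]
  set n := ⌈logb 2 (1 / ε)⌉
  have hscale : 1 / ε ≤ (2 : ℝ) ^ n := le_zpow_ceil_logb one_lt_two (by positivity)
  by_cases hε2 : 2 ≤ ε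
  · refine ⟨0, ⟨by linarith [pi_pos], by linarith [pi_pos]⟩, ⟨0, by simp⟩, ?_, hsucc 0⟩
    linarith [abs_sin_le_one ((θ - 0) / 2)]
  have hn : 0 ≤ n := by
    by_contra! hn
    have : (2 : ℝ) ^ n ≤ 2 ^ (-1 : ℤ) := zpow_le_zpow_right₀ one_le_two (by omega)
    rw [zpow_neg_one, ← one_div] at this
    exact hε2 ((one_div_le_one_div hε two_pos).mp (hscale.trans this))
  have hN : ((2 ^ n.toNat : ℕ) : ℝ) = (2 : ℝ) ^ n := by
    rw [Nat.cast_pow, Nat.cast_ofNat, ← zpow_natCast, Int.toNat_of_nonneg hn]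
  obtain ⟨θs, hθs, hint, hsin⟩ :=
    exists_tan_half_mul_eq_int_and_two_mul_abs_sin_half_sub_le hθ (N := 2 ^ n.toNat)
      (by positivity)
  rw [hN] at hint hsin
  exact ⟨θs, hθs, hint, hsin.trans ((one_div_le hε (by positivity)).mp hscale), hsucc θs⟩
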